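/- Let F be a non-degenerate cdf on ℝ with finite first absolute moment, c > 0 and δ ∈ ℝ \ {0}. If F solves problem P_{c,δ} (i.e. H(x) = 0 for all x ∈ T), then the left endpoint α_F = inf supp(F) is finite, i.e. α_F > −∞. -/

import Mathlib

open MeasureTheory Set

/-- Survival function `G(x) = 1 - F(x) = μ(x, ∞)` of the distribution `μ`. -/
noncomputable def survG (μ : Measure ℝ) (x : ℝ) : ℝ := (μ (Set.Ioi x)).toReal

/-- `H(x) = G(x+δ) - c ∫_x^∞ G(t) dt`. -/
noncomputable def funH (μ : Measure ℝ) (c δ x : ℝ) : ℝ :=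
  survG μ (x + δ) - c * ∫ t in Set.Ioi x, survG μ t

/-- The support of the distribution: points every neighbourhood of which has positive mass. -/
def suppF (μ : Measure ℝ) : Set ℝ :=
  {x | ∀ ε > 0, 0 < μ (Set.Ioo (x - ε) (x + ε))}

/-- The set `R` of continuity points `x` of `F` in the support such that `x + δ` is an atom. -/
def Rset (μ : Measure ℝ) (δ : ℝ) : Set ℝ :=
  {x ∈ suppF μ | μ {x} = 0 ∧ 0 < μ {x + δ}}

/-- `T = supp(F) \ R`. -/
def Tset (μ : Measure ℝ) (δ : ℝ) : Set ℝ := suppF μ \ Rset μ δ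

open scoped ENNReal

lemma survG_antitone (μ : Measure ℝ) [IsFiniteMeasure μ] : Antitone (survG μ) := by
  intro a b hab
  exact ENNReal.toReal_mono (measure_ne_top μ _) (measure_mono (Ioi_subset_Ioi hab))

lemma survG_nonneg (μ : Measure ℝ) (x : ℝ) : 0 ≤ survG μ x := ENNReal.toReal_nonneg

lemma survG_le_one (μ : Measure ℝ) [IsProbabilityMeasure μ] (x : ℝ) : survG μ x ≤ 1 := by
  have := prob_le_one (μ := μ) (s := Set.Ioi x)
  simpa [survG] using ENNReal.toReal_mono (by simp) this

lemma compl_suppF_null (μ : Measure ℝ) : μ (suppF μ)ᶜ = 0 := by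
  set D : Set (ℚ × ℚ) := {pq | μ (Set.Ioo (pq.1 : ℝ) (pq.2 : ℝ)) = 0} with hD
  have hsub : (suppF μ)ᶜ ⊆
      ⋃ pq ∈ D, Set.Ioo ((pq : ℚ × ℚ).1 : ℝ) ((pq : ℚ × ℚ).2 : ℝ) := by
    intro x hx
    simp only [suppF, mem_compl_iff, mem_setOf_eq, not_forall] at hx
    obtain ⟨ε, hε, hzero⟩ := hx
    have hz : μ (Set.Ioo (x - ε) (x + ε)) = 0 := by simpa using hzero
    obtain ⟨p, hp1, hp2⟩ := exists_rat_btwn (show x - ε < x by linarith)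
    obtain ⟨q, hq1, hq2⟩ := exists_rat_btwn (show x < x + ε by linarith)
    refine mem_biUnion (show (p, q) ∈ D from ?_) ?_
    · exact measure_mono_null (Ioo_subset_Ioo hp1.le hq2.le) hz
    · exact ⟨hp2, hq1⟩
  refine measure_mono_null hsub ?_
  rw [measure_biUnion_null_iff (Set.to_countable D)]
  exact fun pq hpq => hpq

/-- If `F` solves problem `P_{c,δ}`, then the left endpoint `α_F = inf supp(F)` is finite,
i.e. the support is bounded below. -/
theorem stmt4 (μ : Measure ℝ) [IsProbabilityMeasure μ]
    (hnd : ∀ x : ℝ, μ {x} ≠ 1)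
    (hint : Integrable (fun x : ℝ => x) μ)
    (c δ : ℝ) (hc : 0 < c) (hδ : δ ≠ 0)
    (hsol : ∀ x ∈ Tset μ δ, funH μ c δ x = 0) :
    BddBelow (suppF μ) := by
  -- Step 1: find M with survG μ t ≥ 1/2 for all t ≤ M
  have htend := tendsto_measure_Ici_atBot μ
  rw [measure_univ] at htend
  have hev : ∀ᶠ N in Filter.atBot, (1/2 : ℝ≥0∞) < μ (Set.Ici N) :=
    htend.eventually_const_lt (by norm_num)
  obtain ⟨N, hN⟩ := hev.exists
  set M : ℝ := N - 1 with hM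
  have hG : ∀ t ≤ M, (1/2 : ℝ) ≤ survG μ t := by
    intro t ht
    have hsub : Set.Ici N ⊆ Set.Ioi t := fun y hy => by
      simp only [mem_Ici] at hy; simp only [mem_Ioi]; linarith
    have : (1/2 : ℝ≥0∞) ≤ μ (Set.Ioi t) := le_trans hN.le (measure_mono hsub)
    have h2 := ENNReal.toReal_mono (measure_ne_top μ _) this
    simpa [survG] using h2
  -- Step 2: funH ≠ 0 for x < x₀
  set x₀ : ℝ := min (M - δ) (M - 2/c) with hx₀
  have hne : ∀ x : ℝ, x < x₀ → funH μ c δ x ≠ 0 := by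
    intro x hx
    have hxδ : x + δ ≤ M := by
      have := lt_of_lt_of_le hx (min_le_left _ _); linarith
    have hxM : 2/c < M - x := by
      have := lt_of_lt_of_le hx (min_le_right _ _); linarith
    have hGδ : (1/2 : ℝ) ≤ survG μ (x + δ) := hG _ hxδ
    by_cases hi : IntegrableOn (survG μ) (Set.Ioi x)
    · have hxltM : x < M := by
        have h2c : 0 < 2/c := by positivity
        linarith
      have hmono : ∫ t in Set.Ioo x M, survG μ t ≤ ∫ t in Set.Ioi x, survG μ t := by
        refine setIntegral_mono_set hi ?_ ?_
        · exact Filter.Eventually.of_forall fun t => survG_nonneg μ t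
        · exact HasSubset.Subset.eventuallyLE Ioo_subset_Ioi_self
      have hconst : ∫ t in Set.Ioo x M, (1/2 : ℝ) ≤ ∫ t in Set.Ioo x M, survG μ t := by
        refine setIntegral_mono_on ?_ ?_ measurableSet_Ioo ?_
        · exact integrableOn_const (by simp) (by simp)
        · exact hi.mono_set Ioo_subset_Ioi_self
        · intro t ht; exact hG t ht.2.le
      have hval : ∫ t in Set.Ioo x M, (1/2 : ℝ) = (M - x) * (1/2) := by
        simp [Real.volume_Ioo, ENNReal.toReal_ofReal (by linarith : (0:ℝ) ≤ M - x), hxltM.le]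
      have hint_lb : (M - x) * (1/2) ≤ ∫ t in Set.Ioi x, survG μ t := by
        rw [← hval]; exact le_trans hconst hmono
      have : 1 < c * ∫ t in Set.Ioi x, survG μ t := by
        have h1 : c * ((M - x) * (1/2)) ≤ c * ∫ t in Set.Ioi x, survG μ t :=
          mul_le_mul_of_nonneg_left hint_lb hc.le
        have h2 : 1 < c * ((M - x) * (1/2)) := by
          rw [div_lt_iff₀ hc] at hxM; nlinarith
        linarith
      have hle1 : survG μ (x + δ) ≤ 1 := survG_le_one μ _
      intro h0
      rw [funH] at h0
      linarith
    · have : ∫ t in Set.Ioi x, survG μ t = 0 := integral_undef hi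
      rw [funH, this]
      intro h0
      rw [mul_zero, sub_zero] at h0
      linarith
  -- Step 3: Tset points are ≥ x₀, hence supp ∩ Iio x₀ ⊆ Rset
  have hTR : ∀ x ∈ suppF μ, x < x₀ → x ∈ Rset μ δ := by
    intro x hx hlt
    by_contra hR
    exact hne x hlt (hsol x ⟨hx, hR⟩)
  -- Step 4: μ (Iio x₀) = 0
  have hcnt : (suppF μ ∩ Set.Iio x₀).Countable := by
    have hatoms : {y : ℝ | 0 < μ {y}}.Countable := by
      have := Measure.countable_meas_level_set_pos (μ := μ) (g := id) measurable_id
      simpa using this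
    have hpre : ((fun x => x + δ) ⁻¹' {y : ℝ | 0 < μ {y}}).Countable :=
      hatoms.preimage (add_left_injective δ)
    refine hpre.mono ?_
    intro x ⟨hx, hlt⟩
    exact (hTR x hx hlt).2.2
  have hnull_supp : μ (suppF μ ∩ Set.Iio x₀) = 0 := by
    have : suppF μ ∩ Set.Iio x₀ = ⋃ x ∈ suppF μ ∩ Set.Iio x₀, {x} :=
      (biUnion_of_singleton _).symm
    rw [this, measure_biUnion_null_iff hcnt]
    intro x ⟨hx, hlt⟩
    exact (hTR x hx hlt).2.1
  have hIio : μ (Set.Iio x₀) = 0 := by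
    have h1 : μ (Set.Iio x₀) ≤ μ (Set.Iio x₀ ∩ suppF μ) + μ (Set.Iio x₀ \ suppF μ) :=
      measure_le_inter_add_diff μ _ _
    have h2 : μ (Set.Iio x₀ ∩ suppF μ) = 0 := by
      rw [Set.inter_comm]; exact hnull_supp
    have h3 : μ (Set.Iio x₀ \ suppF μ) = 0 :=
      measure_mono_null (diff_subset_compl _ _) (compl_suppF_null μ)
    rw [h2, h3, add_zero] at h1
    exact le_antisymm h1 (by simp)
  -- Step 5: conclude
  refine ⟨x₀, fun x hx => ?_⟩
  by_contra hlt
  push_neg at hlt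
  have hε : (0:ℝ) < x₀ - x := by linarith
  have hpos := hx (x₀ - x) hε
  have hsub : Set.Ioo (x - (x₀ - x)) (x + (x₀ - x)) ⊆ Set.Iio x₀ := fun y hy => by
    simp only [mem_Ioo] at hy; simp only [mem_Iio]; linarith [hy.2]
  have hz := measure_mono_null hsub hIio
  rw [hz] at hpos
  exact lt_irrefl 0 hpos
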